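/- arXiv:1407.5647 — 2 statements merged into one kernel-verified Lean document; each statement's English description precedes it below -/
import Mathlib

section
/- Let R be a commutative complete Hausdorff non-archimedean topological ring with a countable fundamental system of open neighbourhoods of 0, admitting a sequence of units converging to 0, and such that the set R°° of topologically nilpotent elements is a neighbourhood of 0. Then R is a noetherian ring if and only if every ideal of R is closed in R. -/
/-!
If every ideal is closed, the union `J` of an increasing chain of ideals is closed, hence complete
and a Baire space, so some member of the chain contains `J ∩ U` for a neighbourhood `U` of `0`;
multiplying by units tending to `0` shows that this member is all of `J`.

Conversely, if `R` is noetherian, the closure `J` of an ideal `I` is generated by finitely many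
`bᵢ`, and a Baire category argument in the style of Banach's open mapping theorem shows that every
element of `J` near `0` is a combination `∑ cᵢ bᵢ` with small coefficients. Approximating each `bᵢ`
by some `aᵢ ∈ I` gives `(1 - F) b = a` with `F` small, and `det (1 - F)` lies in `1 - R°°`, whose
elements are inverted by the geometric series. Hence every `bᵢ` lies in `I`, and `J = I`.
-/

open Filter Topology Set Uniformity
open scoped Matrix

theorem exists_mem_nhds_forall_of_eventually_nhds_pi {ι X : Type*} [Finite ι] [TopologicalSpace X]
    {x : X} {p : (ι → X) → Prop} (h : ∀ᶠ f in 𝓝 (fun _ => x), p f) :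
    ∃ U ∈ 𝓝 x, ∀ f : ι → X, (∀ i, f i ∈ U) → p f := by
  rw [nhds_pi] at h
  obtain ⟨⟨I, U⟩, ⟨-, hU⟩, hsub⟩ := (𝓝 x).basis_sets.pi_self.mem_iff.mp h
  exact ⟨U, hU, fun f hf => hsub fun i _ => hf i⟩

instance Pi.nonarchimedeanAddGroup {ι G : Type*} [Finite ι] [AddGroup G] [TopologicalSpace G]
    [NonarchimedeanAddGroup G] : NonarchimedeanAddGroup (ι → G) where
  is_nonarchimedean U hU := by
    obtain ⟨V, hV, hVU⟩ := exists_mem_nhds_forall_of_eventually_nhds_pi hU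
    obtain ⟨W, hWV⟩ := NonarchimedeanAddGroup.is_nonarchimedean V hV
    exact ⟨⟨AddSubgroup.pi univ fun _ => W, isOpen_set_pi finite_univ fun _ _ => W.isOpen⟩,
      fun f hf => hVU f fun i => hWV (hf i trivial)⟩

theorem NonarchimedeanAddGroup.exists_antitone_basis (G : Type*) [AddGroup G] [TopologicalSpace G]
    [NonarchimedeanAddGroup G] [FirstCountableTopology G] :
    ∃ W : ℕ → OpenAddSubgroup G, (𝓝 (0 : G)).HasAntitoneBasis fun n => (W n : Set G) := by
  have hbasis : (𝓝 (0 : G)).HasBasis (fun _ : OpenAddSubgroup G => True) (↑) :=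
    ⟨fun U => ⟨fun hU => let ⟨W, hW⟩ := is_nonarchimedean U hU; ⟨W, trivial, hW⟩,
      fun ⟨W, _, hW⟩ => mem_of_superset W.mem_nhds_zero hW⟩⟩
  obtain ⟨W, -, hW⟩ := hbasis.exists_antitone_subbasis
  exact ⟨W, hW⟩

theorem AddSubgroup.exists_inter_mem_nhds_subset_of_subset_iUnion {H : Type*} [AddCommGroup H]
    [UniformSpace H] [IsUniformAddGroup H] [CompleteSpace H] [FirstCountableTopology H]
    {J : AddSubgroup H} (hJ : IsClosed (J : Set H)) {A : ℕ → AddSubgroup H}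
    (hA : ∀ n, IsClosed (A n : Set H)) (hcover : (J : Set H) ⊆ ⋃ n, (A n : Set H)) :
    ∃ n, ∃ U ∈ 𝓝 (0 : H), (J : Set H) ∩ U ⊆ A n := by
  have := hJ.completeSpace_coe
  have : (𝓤 H).IsCountablyGenerated := IsUniformAddGroup.uniformity_countably_generated
  have : (𝓤 J).IsCountablyGenerated := by
    rw [uniformity_subtype]; exact comap.isCountablyGenerated _ _
  obtain ⟨n, x, hx⟩ := nonempty_interior_of_iUnion_of_closed
    (f := fun n => ((↑) ⁻¹' (A n : Set H) : Set J))
    (fun n => (hA n).preimage continuous_subtype_val)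
    (eq_univ_of_forall fun y => by simpa using hcover y.2)
  obtain ⟨u, hu, hux⟩ := (mem_nhds_subtype _ x _).mp (mem_interior_iff_mem_nhds.mp hx)
  refine ⟨n, (x + ·) ⁻¹' u, (continuous_const_add _).continuousAt.preimage_mem_nhds
    (by simpa using hu), fun w ⟨hwJ, hwu⟩ => ?_⟩
  have hxw : (x : H) + w ∈ A n := hux (show ((⟨x + w, J.add_mem x.2 hwJ⟩ : J) : H) ∈ u from hwu)
  have hxA : x ∈ ((↑) ⁻¹' (A n : Set H) : Set J) := interior_subset hx
  simpa using (A n).sub_mem hxw hxA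

theorem Submodule.le_of_inter_mem_nhds_subset {R M : Type*} [Ring R] [TopologicalSpace R]
    [AddCommGroup M] [Module R M] [TopologicalSpace M] [ContinuousSMul R M] {r : ℕ → Rˣ}
    (hr : Tendsto (fun n => (r n : R)) atTop (𝓝 0)) {N N' : Submodule R M} {U : Set M}
    (hU : U ∈ 𝓝 0) (hNU : (N : Set M) ∩ U ⊆ N') : N ≤ N' := by
  intro y hy
  have hry : Tendsto (fun n => (r n : R) • y) atTop (𝓝 0) := by simpa using hr.smul_const y
  obtain ⟨n, hn⟩ := (hry.eventually_mem hU).exists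
  exact (N'.smul_mem_iff' (r n)).mp (hNU ⟨N.smul_mem _ hy, hn⟩)

theorem isNoetherian_of_forall_isClosed {R M : Type*} [Ring R] [TopologicalSpace R]
    [AddCommGroup M] [Module R M] [UniformSpace M] [IsUniformAddGroup M] [CompleteSpace M]
    [FirstCountableTopology M] [ContinuousSMul R M] {r : ℕ → Rˣ}
    (hr : Tendsto (fun n => (r n : R)) atTop (𝓝 0))
    (hcl : ∀ N : Submodule R M, IsClosed (N : Set M)) : IsNoetherian R M := by
  refine monotone_stabilizes_iff_noetherian.mp fun f => ?_
  obtain ⟨n, U, hU, hUn⟩ := AddSubgroup.exists_inter_mem_nhds_subset_of_subset_iUnion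
    (J := (⨆ n, f n).toAddSubgroup) (A := fun n => (f n).toAddSubgroup) (hcl _) (fun _ => hcl _)
    fun y hy => mem_iUnion.mpr ((Submodule.mem_iSup_of_chain f y).mp hy)
  have hsup : ⨆ m, f m ≤ f n := Submodule.le_of_inter_mem_nhds_subset hr hU hUn
  exact ⟨n, fun m hm => le_antisymm (f.mono hm) ((le_iSup f m).trans hsup)⟩

theorem LinearMap.exists_inter_mem_nhds_subset_closure_image {R G H : Type*} [Ring R]
    [TopologicalSpace R] [AddCommGroup G] [Module R G] [TopologicalSpace G] [ContinuousSMul R G]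
    [AddCommGroup H] [Module R H] [UniformSpace H] [IsUniformAddGroup H] [CompleteSpace H]
    [FirstCountableTopology H] [ContinuousConstSMul R H] {r : ℕ → Rˣ}
    (hr : Tendsto (fun n => (r n : R)) atTop (𝓝 0)) (φ : G →ₗ[R] H)
    (hrange : IsClosed (Set.range φ)) {W : AddSubgroup G} (hW : (W : Set G) ∈ 𝓝 0) :
    ∃ V ∈ 𝓝 (0 : H), Set.range φ ∩ V ⊆ closure (φ '' W) := by
  set E := (W.map φ.toAddMonoidHom).topologicalClosure
  have hcover : Set.range φ ⊆ ⋃ n, (E.comap (DistribSMul.toAddMonoidHom H (r n : R)) : Set H) := by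
    rintro _ ⟨c, rfl⟩
    have hrc : Tendsto (fun n => (r n : R) • c) atTop (𝓝 0) := by simpa using hr.smul_const c
    obtain ⟨n, hn⟩ := (hrc.eventually_mem hW).exists
    exact mem_iUnion.mpr ⟨n, subset_closure ⟨_, hn, by simp⟩⟩
  obtain ⟨n, U, hU, hUE⟩ := AddSubgroup.exists_inter_mem_nhds_subset_of_subset_iUnion
    (J := (LinearMap.range φ).toAddSubgroup)
    (by rwa [Submodule.coe_toAddSubgroup, LinearMap.coe_range])
    (fun n => (W.map φ.toAddMonoidHom).isClosed_topologicalClosure.preimage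
      (continuous_const_smul _)) hcover
  refine ⟨((((r n)⁻¹ : Rˣ) : R) • ·) ⁻¹' U,
    (continuous_const_smul _).continuousAt.preimage_mem_nhds (by simpa using hU),
    fun y ⟨hy, hyU⟩ => ?_⟩
  have := hUE ⟨(LinearMap.range φ).smul_mem _ (by simpa using hy), hyU⟩
  simpa [E, smul_smul] using this

theorem exists_sub_mem_closure_image {G H F : Type*} [AddCommGroup G] [AddCommGroup H]
    [TopologicalSpace H] [IsTopologicalAddGroup H] [FunLike F G H] [AddMonoidHomClass F G H]
    (φ : F) (hrange : IsClosed (range φ)) {D D' : Set G} {V : Set H} (hV : V ∈ 𝓝 0)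
    (hVD' : range φ ∩ V ⊆ closure (φ '' D')) {y : H} (hy : y ∈ closure (φ '' D)) :
    ∃ c ∈ D, y - φ c ∈ closure (φ '' D') := by
  have hyφ : y ∈ range φ := closure_minimal (image_subset_range _ _) hrange hy
  obtain ⟨_, hzV, c, hc, rfl⟩ := mem_closure_iff_nhds.mp hy {z | y - z ∈ V}
    ((continuous_sub_left y).continuousAt.preimage_mem_nhds (by simpa using hV))
  refine ⟨c, hc, hVD' ⟨?_, hzV⟩⟩
  obtain ⟨x, rfl⟩ := hyφ
  exact ⟨x - c, map_sub φ x c⟩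

theorem exists_seq_sub_map_sum_mem {G H F : Type*} [AddCommGroup G] [AddCommGroup H]
    [FunLike F G H] [AddMonoidHomClass F G H] (φ : F) {D : ℕ → Set G} {E : ℕ → Set H}
    (step : ∀ s, ∀ y ∈ E s, ∃ c ∈ D s, y - φ c ∈ E (s + 1)) {y₀ : H} (hy₀ : y₀ ∈ E 0) :
    ∃ c : ℕ → G, (∀ j, c j ∈ D j) ∧ ∀ m, y₀ - φ (∑ j ∈ Finset.range m, c j) ∈ E m := by
  choose! g hgD hgE using step
  let y : ℕ → H := fun m => Nat.rec y₀ (fun s ys => ys - φ (g s ys)) m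
  have hyE : ∀ m, y m ∈ E m := fun m => by
    induction m with
    | zero => exact hy₀
    | succ m ih => exact hgE m _ ih
  have hy : ∀ m, y₀ - φ (∑ j ∈ Finset.range m, g j (y j)) = y m := fun m => by
    induction m with
    | zero => simp [y]
    | succ m ih => rw [Finset.sum_range_succ, map_add, ← sub_sub, ih]
  exact ⟨fun j => g j (y j), fun j => hgD j _ (hyE j), fun m => hy m ▸ hyE m⟩

/-- Successive approximation: the remainders of `y₀` are approximated from `φ '' W (k + 1 + j)`,
and the resulting coefficients are summable, with sum in the closed subgroup `W k`. -/
theorem closure_image_succ_subset_image {G H F : Type*} [AddCommGroup G] [UniformSpace G]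
    [IsUniformAddGroup G] [NonarchimedeanAddGroup G] [CompleteSpace G] [AddCommGroup H]
    [TopologicalSpace H] [IsTopologicalAddGroup H] [T2Space H] [FunLike F G H]
    [AddMonoidHomClass F G H] (φ : F) (hφ : Continuous φ) (hrange : IsClosed (range φ))
    {W : ℕ → OpenAddSubgroup G} (hW : (𝓝 0).HasAntitoneBasis fun k => (W k : Set G))
    (hV : ∀ k, ∃ V ∈ 𝓝 (0 : H), range φ ∩ V ⊆ closure (φ '' W k)) (k : ℕ) :
    closure (φ '' W (k + 1)) ⊆ φ '' W k := by
  intro y₀ hy₀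
  choose V hV0 hVW using hV
  obtain ⟨c, hcW, hcE⟩ := exists_seq_sub_map_sum_mem φ (D := fun j => W (k + 1 + j))
    (E := fun j => closure (φ '' W (k + 1 + j)))
    (fun s _ hy => exists_sub_mem_closure_image φ hrange (hV0 _) (hVW _) hy) hy₀
  have hsum : Summable c := NonarchimedeanAddGroup.summable_of_tendsto_cofinite_zero <| by
    rw [Nat.cofinite_eq_atTop]
    exact hW.tendsto fun j => hW.antitone (by omega) (hcW j)
  have hmem : ∑' j, c j ∈ W k := (W k).isClosed.mem_of_tendsto hsum.hasSum.tendsto_sum_nat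
    (Eventually.of_forall fun m => (W k).sum_mem fun j _ => hW.antitone (by omega) (hcW j))
  have hrem : Tendsto (fun m => y₀ - φ (∑ j ∈ Finset.range m, c j)) atTop (𝓝 0) := by
    refine (closed_nhds_basis (0 : H)).tendsto_right_iff.mpr fun U ⟨hU, hUc⟩ => ?_
    obtain ⟨i, hi⟩ := hW.mem_iff.mp (hφ.continuousAt.preimage_mem_nhds (by rwa [map_zero]))
    filter_upwards [eventually_ge_atTop i] with m hm
    exact closure_minimal (image_subset_iff.mpr ((hW.antitone (by omega)).trans hi)) hUc (hcE m)
  refine ⟨_, hmem, tendsto_nhds_unique (hsum.hasSum.map φ hφ).tendsto_sum_nat ?_⟩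
  simpa [map_sum] using (tendsto_const_nhds (x := y₀)).sub hrem

theorem LinearMap.exists_inter_mem_nhds_subset_image {R G H : Type*} [Ring R] [TopologicalSpace R]
    [AddCommGroup G] [Module R G] [UniformSpace G] [IsUniformAddGroup G] [NonarchimedeanAddGroup G]
    [CompleteSpace G] [FirstCountableTopology G] [ContinuousSMul R G] [AddCommGroup H]
    [Module R H] [UniformSpace H] [IsUniformAddGroup H] [CompleteSpace H]
    [FirstCountableTopology H] [T2Space H] [ContinuousConstSMul R H] {r : ℕ → Rˣ}
    (hr : Tendsto (fun n => (r n : R)) atTop (𝓝 0)) (φ : G →ₗ[R] H) (hφ : Continuous φ)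
    (hrange : IsClosed (Set.range φ)) {U : Set G} (hU : U ∈ 𝓝 0) :
    ∃ V ∈ 𝓝 (0 : H), Set.range φ ∩ V ⊆ φ '' U := by
  obtain ⟨W, hW⟩ := NonarchimedeanAddGroup.exists_antitone_basis G
  obtain ⟨k, hk⟩ := hW.mem_iff.mp hU
  have hV (k : ℕ) : ∃ V ∈ 𝓝 (0 : H), Set.range φ ∩ V ⊆ closure (φ '' W k) :=
    φ.exists_inter_mem_nhds_subset_closure_image hr hrange (W k).mem_nhds_zero
  obtain ⟨V, hV0, hVW⟩ := hV (k + 1)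
  exact ⟨V, hV0, hVW.trans ((closure_image_succ_subset_image φ hφ hrange hW hV k).trans
    (image_mono hk))⟩

section CompleteNonarchimedeanRing

variable {R : Type*} [CommRing R] [UniformSpace R] [IsUniformAddGroup R] [NonarchimedeanRing R]
  [CompleteSpace R] [T2Space R]

theorem IsTopologicallyNilpotent.isUnit_one_sub {u : R} (hu : IsTopologicallyNilpotent u) :
    IsUnit (1 - u) := by
  have hsum : Summable (u ^ ·) :=
    NonarchimedeanAddGroup.summable_of_tendsto_cofinite_zero (by rwa [Nat.cofinite_eq_atTop])
  refine IsUnit.of_mul_eq_one (∑' n, u ^ n)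
    (tendsto_nhds_unique (hsum.hasSum.tendsto_sum_nat.const_mul (1 - u)) ?_)
  simpa [mul_neg_geom_sum] using (tendsto_const_nhds (x := (1 : R))).sub hu

theorem setOf_isUnit_mem_nhds_one (hnil : {r : R | IsTopologicallyNilpotent r} ∈ 𝓝 0) :
    {x : R | IsUnit x} ∈ 𝓝 1 := by
  have hnil' : {x : R | IsTopologicallyNilpotent (1 - x)} ∈ 𝓝 1 :=
    (continuous_sub_left (1 : R)).continuousAt (x := 1) |>.preimage_mem_nhds
      (t := {r | IsTopologicallyNilpotent r}) (by simpa using hnil)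
  filter_upwards [hnil'] with x hx
  simpa using hx.isUnit_one_sub

theorem eventually_isUnit_det_one_sub {ι : Type*} [Fintype ι] [DecidableEq ι]
    (hnil : {r : R | IsTopologicallyNilpotent r} ∈ 𝓝 0) :
    ∀ᶠ F in 𝓝 (0 : Matrix ι ι R), IsUnit (1 - F).det := by
  have hdet : Continuous fun F : Matrix ι ι R => (1 - F).det :=
    (continuous_const.sub continuous_id).matrix_det
  exact hdet.continuousAt.preimage_mem_nhds (t := {x | IsUnit x})
    (by simpa using setOf_isUnit_mem_nhds_one hnil)

end CompleteNonarchimedeanRing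

theorem Ideal.mem_of_isUnit_det_of_forall_mulVec_mem {R ι : Type*} [CommRing R] [Fintype ι]
    [DecidableEq ι] {I : Ideal R} {M : Matrix ι ι R} (hM : IsUnit M.det) {b : ι → R}
    (hMb : ∀ i, (M *ᵥ b) i ∈ I) (i : ι) : b i ∈ I := by
  have hb : b = M⁻¹ *ᵥ (M *ᵥ b) := by
    rw [Matrix.mulVec_mulVec, M.nonsing_inv_mul hM, Matrix.one_mulVec]
  rw [hb]
  exact I.sum_mem fun j _ => I.mul_mem_left _ (hMb j)

theorem Ideal.isClosed_of_fg_closure {R : Type*} [CommRing R] [UniformSpace R]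
    [NonarchimedeanRing R] [IsUniformAddGroup R] [CompleteSpace R] [T2Space R]
    [FirstCountableTopology R] {r : ℕ → Rˣ} (hr : Tendsto (fun n => (r n : R)) atTop (𝓝 0))
    (hnil : {r : R | IsTopologicallyNilpotent r} ∈ 𝓝 0) {I : Ideal R} (hI : I.closure.FG) :
    IsClosed (I : Set R) := by
  obtain ⟨n, b, hb⟩ := Submodule.fg_iff_exists_fin_generating_family.mp hI
  set φ := Fintype.linearCombination R b
  have hrange : Set.range φ = I.closure := by
    rw [← LinearMap.coe_range, Fintype.range_linearCombination, hb]
  have hbJ (i : Fin n) : b i ∈ I.closure := hb ▸ Submodule.subset_span ⟨i, rfl⟩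
  have hφ : Continuous φ := by
    simp only [φ]
    fun_prop
  obtain ⟨U, hU, hdet⟩ : ∃ U ∈ 𝓝 0, ∀ F : Matrix (Fin n) (Fin n) R, (∀ i, F i ∈ U) →
      IsUnit (1 - F).det :=
    exists_mem_nhds_forall_of_eventually_nhds_pi (eventually_isUnit_det_one_sub hnil)
  obtain ⟨V, hV, hVU⟩ := φ.exists_inter_mem_nhds_subset_image hr hφ
    (by rw [hrange, Ideal.coe_closure]; exact isClosed_closure) hU
  have happrox (i : Fin n) : ∃ c ∈ U, b i - φ c ∈ I := by
    obtain ⟨a, haV, haI⟩ := mem_closure_iff_nhds.mp (hbJ i) {a | b i - a ∈ V}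
      ((continuous_sub_left (b i)).continuousAt (x := b i) |>.preimage_mem_nhds
        (by simpa using hV))
    obtain ⟨c, hc, hca⟩ := hVU ⟨hrange ▸ I.closure.sub_mem (hbJ i) (subset_closure haI), haV⟩
    exact ⟨c, hc, by rwa [hca, sub_sub_cancel]⟩
  choose F hFU hFI using happrox
  have hFb (i : Fin n) : ((1 - Matrix.of F) *ᵥ b) i ∈ I := by
    rw [Matrix.sub_mulVec, Matrix.one_mulVec]
    simpa [φ, Fintype.linearCombination_apply, Matrix.mulVec, dotProduct] using hFI i
  have hbI := Ideal.mem_of_isUnit_det_of_forall_mulVec_mem (hdet (.of F) hFU) hFb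
  have hIc : I.closure ≤ I := by
    rw [← hb, Submodule.span_le]
    rintro _ ⟨i, rfl⟩
    exact hbI i
  exact isClosed_of_closure_subset hIc

/-- Let `R` be a commutative complete Hausdorff non-archimedean first-countable
topological ring with a sequence of units converging to `0` whose set of topologically
nilpotent elements is a neighbourhood of `0`. Then `R` is noetherian if and only if
every ideal of `R` is closed. -/
theorem noetherianRing_iff_ideals_closed
    {R : Type*} [CommRing R] [UniformSpace R] [NonarchimedeanRing R]
    [IsUniformAddGroup R] [CompleteSpace R] [T2Space R]
    [FirstCountableTopology R]
    (hu : ∃ r : ℕ → Rˣ, Filter.Tendsto (fun n => (r n : R)) Filter.atTop (nhds 0))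
    (hnil : {r : R | Filter.Tendsto (fun n => r ^ n) Filter.atTop (nhds 0)} ∈ nhds (0 : R)) :
    IsNoetherianRing R ↔ ∀ I : Ideal R, IsClosed (I : Set R) := by
  obtain ⟨r, hr⟩ := hu
  constructor
  · intro _ I
    exact Ideal.isClosed_of_fg_closure hr hnil (IsNoetherian.noetherian _)
  · intro hcl
    exact isNoetherianRing_iff.mpr (isNoetherian_of_forall_isClosed hr hcl)
end

section
/- Let R be a commutative complete Hausdorff topological ring admitting a sequence of units converging to 0 and having a countable fundamental system of open neighbourhoods of 0. Let M be a finitely generated R-module, and let T and T' be two topologies on M each making M a Hausdorff, complete topological R-module with a countable fundamental system of open neighbourhoods of 0. Then T = T'. -/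
/-!
Both topologies are the module topology, i.e. the quotient topology of `Rⁿ` along a surjection
`π : Rⁿ → M`; so it suffices that every such `π` is open (Banach–Schauder). As `M` is a complete
metrizable group it is Baire, and since `M = ⋃ₖ rₖ⁻¹ • π '' V` for every neighbourhood `V` of `0`,
some `closure (π '' V)` has interior; hence `closure (π '' W)` is a neighbourhood of `0` for every
neighbourhood `W`. Successive approximation, converging in the complete group `Rⁿ`, then removes
the closure.
-/

/-- A topological abelian group (with explicitly given topology `t`) is sequentially
complete: every Cauchy sequence converges. -/
def SeqCompleteTop {M : Type*} [AddCommGroup M] (t : TopologicalSpace M) : Prop :=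
  ∀ x : ℕ → M,
    (∀ U ∈ @nhds M t 0, ∃ K : ℕ, ∀ m ≥ K, ∀ k ≥ K, x m - x k ∈ U) →
    ∃ y : M, Filter.Tendsto x Filter.atTop (@nhds M t y)

open Filter Topology Set Pointwise Uniformity

theorem SeqCompleteTop.baireSpace {M : Type*} [AddCommGroup M] [tM : TopologicalSpace M]
    [IsTopologicalAddGroup M] [FirstCountableTopology M] (hM : SeqCompleteTop tM) :
    BaireSpace M := by
  let _ : UniformSpace M := IsTopologicalAddGroup.rightUniformSpace M
  have _ : IsUniformAddGroup M := isUniformAddGroup_of_addCommGroup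
  have _ : (𝓤 M).IsCountablyGenerated := by
    rw [uniformity_eq_comap_nhds_zero]
    infer_instance
  have _ : CompleteSpace M := by
    refine UniformSpace.complete_of_cauchySeq_tendsto fun x hx => hM x fun U hU => ?_
    obtain ⟨K, hK⟩ := cauchySeq_iff.1 hx _ (uniformity_eq_comap_nhds_zero M ▸ preimage_mem_comap hU)
    exact ⟨K, fun m hm k hk => hK k hk m hm⟩
  let _ : PseudoMetricSpace M := UniformSpace.pseudoMetricSpace M
  infer_instance

theorem nonempty_interior_closure_of_iUnion_smul_eq_univ {Γ X ι : Type*} [Group Γ]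
    [TopologicalSpace X] [BaireSpace X] [Nonempty X] [MulAction Γ X] [ContinuousConstSMul Γ X]
    [Countable ι] (g : ι → Γ) {A : Set X} (hA : ⋃ i, g i • A = univ) :
    (interior (closure A)).Nonempty := by
  obtain ⟨i, hi⟩ := nonempty_interior_of_iUnion_of_closed (f := fun i => closure (g i • A))
    (fun _ => isClosed_closure) (univ_subset_iff.1 (hA ▸ iUnion_mono fun _ => subset_closure))
  rw [closure_smul, interior_smul] at hi
  exact smul_set_nonempty.1 hi

theorem closure_sub_self_mem_nhds_zero {H : Type*} [AddGroup H] [TopologicalSpace H]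
    [IsTopologicalAddGroup H] {A : Set H} (hA : (interior (closure A)).Nonempty) :
    closure (A - A) ∈ 𝓝 (0 : H) := by
  obtain ⟨a, haO, haA⟩ : (interior (closure A) ∩ A).Nonempty :=
    mem_closure_iff.1 (interior_subset hA.some_mem) _ isOpen_interior hA.some_mem
  have h0 : (0 : H) ∈ interior (closure A) - A := ⟨a, haO, a, haA, sub_self a⟩
  refine mem_of_superset (isOpen_interior.sub_right.mem_nhds h0) ?_
  rintro _ ⟨o, ho, b, hb, rfl⟩
  have hsub : (· - b) '' A ⊆ A - A := image_subset_iff.2 fun x hx => sub_mem_sub hx hb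
  exact closure_mono hsub (image_closure_subset_closure_image (continuous_sub_right b)
    (mem_image_of_mem _ (interior_subset ho)))

theorem exists_antitone_basis_nhds_zero_closed_add_subset {G : Type*} [AddGroup G]
    [TopologicalSpace G] [IsTopologicalAddGroup G] [FirstCountableTopology G] {N : Set G}
    (hN : N ∈ 𝓝 (0 : G)) :
    ∃ U : ℕ → Set G, (𝓝 (0 : G)).HasAntitoneBasis U ∧ (∀ k, IsClosed (U k)) ∧
      (∀ k, U (k + 1) + U (k + 1) ⊆ U k) ∧ U 0 ⊆ N := by
  obtain ⟨B, hB⟩ := (𝓝 (0 : G)).exists_antitone_basis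
  have half : ∀ S ∈ 𝓝 (0 : G), ∃ V ∈ 𝓝 (0 : G), IsClosed V ∧ V + V ⊆ S := fun S hS => by
    obtain ⟨V, hV, hVc, -, hVS⟩ := exists_closed_nhds_zero_neg_eq_add_subset hS
    exact ⟨V, hV, hVc, hVS⟩
  choose! v hv using half
  have subset_of_add_subset : ∀ {V S : Set G}, V ∈ 𝓝 0 → V + V ⊆ S → V ⊆ S := fun hV hVS x hx =>
    hVS ⟨x, hx, 0, mem_of_mem_nhds hV, add_zero x⟩
  let U : ℕ → Set G := fun k => Nat.rec (v (N ∩ B 0)) (fun k S => v (S ∩ B (k + 1))) k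
  have hU : ∀ k, U k ∈ 𝓝 (0 : G) ∧ IsClosed (U k) ∧ U k ⊆ B k := by
    intro k
    induction k with
    | zero =>
      obtain ⟨h1, h2, h3⟩ := hv _ (inter_mem hN (hB.mem 0))
      exact ⟨h1, h2, (subset_of_add_subset h1 h3).trans inter_subset_right⟩
    | succ k ih =>
      obtain ⟨h1, h2, h3⟩ := hv _ (inter_mem ih.1 (hB.mem (k + 1)))
      exact ⟨h1, h2, (subset_of_add_subset h1 h3).trans inter_subset_right⟩
  have hadd : ∀ k, U (k + 1) + U (k + 1) ⊆ U k := fun k =>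
    ((hv _ (inter_mem (hU k).1 (hB.mem (k + 1)))).2.2).trans inter_subset_left
  have hbasis : (𝓝 (0 : G)).HasBasis (fun _ => True) U :=
    hB.toHasBasis.to_hasBasis' (fun k _ => ⟨k, trivial, (hU k).2.2⟩) (fun k _ => (hU k).1)
  have hanti : Antitone U :=
    antitone_nat_of_succ_le fun k => subset_of_add_subset (hU (k + 1)).1 (hadd k)
  refine ⟨U, ⟨hbasis, hanti⟩, fun k => (hU k).2.1, hadd, ?_⟩
  exact (subset_of_add_subset (hU 0).1 (hv _ (inter_mem hN (hB.mem 0))).2.2).trans inter_subset_left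

theorem sum_range_mem_of_add_subset {G : Type*} [AddCommMonoid G] {U : ℕ → Set G}
    (hU₀ : ∀ k, (0 : G) ∈ U k) (hadd : ∀ k, U (k + 1) + U (k + 1) ⊆ U k) {x : ℕ → G}
    (hx : ∀ i, x i ∈ U (i + 1)) (n j : ℕ) : ∑ i ∈ Finset.range j, x (n + i) ∈ U n := by
  induction j generalizing n with
  | zero => simpa using hU₀ n
  | succ j ih =>
    rw [Finset.sum_range_succ']
    simpa only [add_zero, add_assoc, add_comm 1] using hadd n ⟨_, ih (n + 1), _, hx n, rfl⟩

section OpenMapping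

variable {G H : Type*} [AddCommGroup G] [AddCommGroup H] [TopologicalSpace H]
  [IsTopologicalAddGroup H] {U : ℕ → Set G}

theorem cauchySeq_sum_range_of_add_subset [UniformSpace G] [IsUniformAddGroup G]
    (hU : (𝓝 (0 : G)).HasAntitoneBasis U) (hadd : ∀ k, U (k + 1) + U (k + 1) ⊆ U k)
    {x : ℕ → G} (hx : ∀ i, x i ∈ U (i + 1)) :
    CauchySeq fun m => ∑ i ∈ Finset.range m, x i := by
  refine hU.toHasBasis.uniformity_of_nhds_zero_swapped.cauchySeq_iff'.2 fun n _ => ⟨n, ?_⟩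
  intro m hm
  obtain ⟨j, rfl⟩ := Nat.exists_eq_add_of_le hm
  simp only [mem_ofPred_eq, Finset.sum_range_add_sub_sum_range]
  exact sum_range_mem_of_add_subset (fun k => mem_of_mem_nhds (hU.mem k)) hadd hx n j

theorem tendsto_zero_of_mem_closure_image [TopologicalSpace G]
    (hU : (𝓝 (0 : G)).HasAntitoneBasis U) {f : G →+ H} (hf : Continuous f) {z : ℕ → H}
    (hz : ∀ m, z m ∈ closure (f '' U m)) : Tendsto z atTop (𝓝 0) := by
  refine tendsto_iff_forall_eventually_mem.2 fun Q hQ => ?_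
  obtain ⟨Q', hQ', hQ'c, hQ'Q⟩ := exists_mem_nhds_isClosed_subset hQ
  have hpre : f ⁻¹' Q' ∈ 𝓝 (0 : G) := hf.tendsto' 0 0 (map_zero f) hQ'
  filter_upwards [hU.eventually_subset hpre] with m hm
  exact hQ'Q (closure_minimal (image_subset_iff.2 hm) hQ'c (hz m))

variable [UniformSpace G] [IsUniformAddGroup G] [CompleteSpace G] [T2Space H]

theorem AddMonoidHom.closure_image_subset_image (hU : (𝓝 (0 : G)).HasAntitoneBasis U)
    (hclosed : ∀ k, IsClosed (U k)) (hadd : ∀ k, U (k + 1) + U (k + 1) ⊆ U k)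
    (f : G →+ H) (hf : Continuous f) (h : ∀ W ∈ 𝓝 (0 : G), closure (f '' W) ∈ 𝓝 (0 : H)) :
    closure (f '' U 1) ⊆ f '' U 0 := by
  have step : ∀ k, ∀ z ∈ closure (f '' U (k + 1)),
      ∃ a ∈ U (k + 1), z - f a ∈ closure (f '' U (k + 2)) := by
    intro k z hz
    obtain ⟨_, ⟨a, ha, rfl⟩, hza⟩ :=
      mem_closure_iff_nhds_zero.1 hz _ (neg_mem_nhds_zero H (h _ (hU.mem (k + 2))))
    exact ⟨a, ha, by simpa using hza⟩
  choose! a ha using step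
  intro y hy
  let z : ℕ → H := fun k => Nat.rec y (fun k zk => zk - f (a k zk)) k
  have hz : ∀ k, z k ∈ closure (f '' U (k + 1)) := by
    intro k
    induction k with
    | zero => exact hy
    | succ k ih => exact (ha k (z k) ih).2
  let x : ℕ → G := fun i => a i (z i)
  have hzx : ∀ m, z m = y - f (∑ i ∈ Finset.range m, x i) := by
    intro m
    induction m with
    | zero => simp [z]
    | succ m ih => rw [Finset.sum_range_succ, map_add, ← sub_sub, ← ih]
  have hx : ∀ i, x i ∈ U (i + 1) := fun i => (ha i (z i) (hz i)).1
  obtain ⟨x₀, hx₀⟩ := cauchySeq_tendsto_of_complete (cauchySeq_sum_range_of_add_subset hU hadd hx)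
  have hx₀U : x₀ ∈ U 0 := (hclosed 0).mem_of_tendsto hx₀ (Eventually.of_forall fun m => by
    simpa using sum_range_mem_of_add_subset (fun k => mem_of_mem_nhds (hU.mem k)) hadd hx 0 m)
  have hz0 : Tendsto z atTop (𝓝 0) := tendsto_zero_of_mem_closure_image hU hf fun m =>
    closure_mono (image_mono (hU.antitone m.le_succ)) (hz m)
  have hlim : Tendsto (fun m => f (∑ i ∈ Finset.range m, x i)) atTop (𝓝 y) := by
    simpa [hzx] using (tendsto_const_nhds (x := y)).sub hz0
  exact ⟨x₀, hx₀U, tendsto_nhds_unique ((hf.tendsto x₀).comp hx₀) hlim⟩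

theorem AddMonoidHom.isOpenMap_of_closure_image_mem_nhds [FirstCountableTopology G]
    (f : G →+ H) (hf : Continuous f) (h : ∀ W ∈ 𝓝 (0 : G), closure (f '' W) ∈ 𝓝 (0 : H)) :
    IsOpenMap f := by
  refine IsTopologicalAddGroup.isOpenMap_iff_nhds_zero.2 (le_map_iff.2 fun N hN => ?_)
  obtain ⟨U, hU, hclosed, hadd, hUN⟩ := exists_antitone_basis_nhds_zero_closed_add_subset hN
  exact mem_of_superset (h _ (hU.mem 1))
    ((f.closure_image_subset_image hU hclosed hadd hf h).trans (image_mono hUN))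

end OpenMapping

section Module

variable {R N M : Type*} [Ring R] [TopologicalSpace R]
  [AddCommGroup N] [Module R N] [AddCommGroup M] [Module R M] [TopologicalSpace M]
  [IsTopologicalAddGroup M] [ContinuousConstSMul R M] [BaireSpace M] {r : ℕ → Rˣ}

theorem LinearMap.closure_image_mem_nhds_zero [TopologicalSpace N] [IsTopologicalAddGroup N]
    [ContinuousSMul R N] (hr : Tendsto (fun k => (r k : R)) atTop (𝓝 0)) {π : N →ₗ[R] M}
    (hπ : Function.Surjective π) {W : Set N} (hW : W ∈ 𝓝 0) : closure (π '' W) ∈ 𝓝 0 := by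
  obtain ⟨V, hV, -, hVneg, hVW⟩ := exists_closed_nhds_zero_neg_eq_add_subset hW
  have hcover : ⋃ k, (r k)⁻¹ • (π '' V) = univ := by
    refine eq_univ_of_forall fun m => ?_
    obtain ⟨x, rfl⟩ := hπ m
    obtain ⟨k, hk⟩ := ((hr.smul_const x).eventually_mem (by simpa using hV)).exists
    refine mem_iUnion.2 ⟨k, π ((r k : R) • x), mem_image_of_mem _ hk, ?_⟩
    simp [smul_smul]
  refine mem_of_superset (closure_sub_self_mem_nhds_zero
    (nonempty_interior_closure_of_iUnion_smul_eq_univ _ hcover)) (closure_mono ?_)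
  rw [← image_sub, sub_eq_add_neg, hVneg]
  exact image_mono hVW

theorem LinearMap.isOpenMap_of_surjective_of_tendsto_units [UniformSpace N] [IsUniformAddGroup N]
    [CompleteSpace N] [FirstCountableTopology N] [ContinuousSMul R N] [T2Space M]
    (hr : Tendsto (fun k => (r k : R)) atTop (𝓝 0)) (π : N →ₗ[R] M) (hπ : Function.Surjective π)
    (hcont : Continuous π) : IsOpenMap π :=
  π.toAddMonoidHom.isOpenMap_of_closure_image_mem_nhds hcont fun _ hW =>
    π.closure_image_mem_nhds_zero hr hπ hW

end Module

theorem eq_moduleTopology_of_seqCompleteTop {R M : Type*} [Ring R] [UniformSpace R]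
    [IsTopologicalRing R] [IsUniformAddGroup R] [CompleteSpace R] [FirstCountableTopology R]
    [AddCommGroup M] [Module R M] [Module.Finite R M] [tM : TopologicalSpace M]
    [IsTopologicalAddGroup M] [ContinuousSMul R M] [T2Space M] [FirstCountableTopology M]
    (hu : ∃ r : ℕ → Rˣ, Tendsto (fun n => (r n : R)) atTop (𝓝 0)) (hM : SeqCompleteTop tM) :
    tM = moduleTopology R M := by
  obtain ⟨r, hr⟩ := hu
  obtain ⟨n, π, hπ⟩ := Module.Finite.exists_fin' R M
  have := hM.baireSpace
  have hcont : Continuous π := IsModuleTopology.continuous_of_linearMap π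
  rw [ModuleTopology.eq_coinduced_of_surjective hπ]
  have hopen := π.isOpenMap_of_surjective_of_tendsto_units hr hπ hcont
  exact (hopen.isQuotientMap hcont hπ).eq_coinduced

theorem unique_complete_module_topology_general
    {R : Type*} [CommRing R] [UniformSpace R] [IsTopologicalRing R] [IsUniformAddGroup R]
    [CompleteSpace R] [FirstCountableTopology R]
    (hu : ∃ r : ℕ → Rˣ, Filter.Tendsto (fun n => (r n : R)) Filter.atTop (nhds 0))
    {M : Type*} [AddCommGroup M] [Module R M] [Module.Finite R M]
    (t t' : TopologicalSpace M)
    (ht₁ : @IsTopologicalAddGroup M t _) (ht₂ : @ContinuousSMul R M _ _ t)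
    (ht₃ : @T2Space M t) (ht₄ : @FirstCountableTopology M t)
    (ht₅ : SeqCompleteTop t)
    (ht'₁ : @IsTopologicalAddGroup M t' _) (ht'₂ : @ContinuousSMul R M _ _ t')
    (ht'₃ : @T2Space M t') (ht'₄ : @FirstCountableTopology M t')
    (ht'₅ : SeqCompleteTop t') :
    t = t' :=
  (eq_moduleTopology_of_seqCompleteTop (tM := t) hu ht₅).trans
    (eq_moduleTopology_of_seqCompleteTop (tM := t') hu ht'₅).symm

/-- Over a commutative complete Hausdorff first-countable topological ring with a
sequence of units converging to `0`, any two topologies on a finitely generated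
`R`-module which make it a Hausdorff, complete topological `R`-module with a countable
fundamental system of neighbourhoods of `0` coincide. -/
theorem unique_complete_module_topology
    {R : Type*} [CommRing R] [UniformSpace R] [IsTopologicalRing R] [IsUniformAddGroup R]
    [CompleteSpace R] [T2Space R] [FirstCountableTopology R]
    (hu : ∃ r : ℕ → Rˣ, Filter.Tendsto (fun n => (r n : R)) Filter.atTop (nhds 0))
    {M : Type*} [AddCommGroup M] [Module R M] [Module.Finite R M]
    (t t' : TopologicalSpace M)
    (ht₁ : @IsTopologicalAddGroup M t _) (ht₂ : @ContinuousSMul R M _ _ t)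
    (ht₃ : @T2Space M t) (ht₄ : @FirstCountableTopology M t)
    (ht₅ : SeqCompleteTop t)
    (ht'₁ : @IsTopologicalAddGroup M t' _) (ht'₂ : @ContinuousSMul R M _ _ t')
    (ht'₃ : @T2Space M t') (ht'₄ : @FirstCountableTopology M t')
    (ht'₅ : SeqCompleteTop t') :
    t = t' :=
  unique_complete_module_topology_general hu t t' ht₁ ht₂ ht₃ ht₄ ht₅ ht'₁ ht'₂ ht'₃ ht'₄ ht'₅
end
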